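/- For the one-dimensional Fokker–Planck equation ∂_t ρ = h²∂_x(ρ[θ(x)V′(x) - (β/2)θ′(x)]) + βh²∂_{xx}(ρθ(x)) on (0,1), the density ρ*(x) = (1/Z)e^{-V(x)/β}θ(x)^{-1/2} is a stationary solution, provided Z = ∫₀¹ e^{-V(y)/β}θ(y)^{-1/2}dy < ∞, θ ∈ C², θ > 0 on (0,1), and V ∈ C². -/

import Mathlib

open MeasureTheory

/-- The density `ρ*(x) = (1/Z) e^{-V(x)/β} θ(x)^{-1/2}` is a stationary solution of the
one-dimensional Fokker–Planck equation
`∂_t ρ = h² ∂_x(ρ [θ V' - (β/2) θ']) + β h² ∂_{xx}(ρ θ)` on `(0,1)`: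
the right-hand side vanishes at `ρ = ρ*`. -/
theorem stationary_density_two_point (h β : ℝ) (hh : 0 < h) (hβ : 0 < β)
    (θ V : ℝ → ℝ)
    (hθ : ContDiffOn ℝ 2 θ (Set.Ioo 0 1)) (hθpos : ∀ x ∈ Set.Ioo (0:ℝ) 1, 0 < θ x)
    (hV : ContDiffOn ℝ 2 V (Set.Ioo 0 1))
    (Z : ℝ)
    (hZdef : Z = ∫ y in Set.Ioo (0:ℝ) 1, Real.exp (-V y / β) * (θ y) ^ (-(1/2) : ℝ))
    (hint : IntegrableOn (fun y => Real.exp (-V y / β) * (θ y) ^ (-(1/2) : ℝ))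
      (Set.Ioo (0:ℝ) 1))
    (hZpos : 0 < Z)
    (ρ : ℝ → ℝ)
    (hρ : ∀ x, ρ x = Z⁻¹ * Real.exp (-V x / β) * (θ x) ^ (-(1/2) : ℝ)) :
    ∀ x ∈ Set.Ioo (0:ℝ) 1,
      h ^ 2 * deriv (fun y => ρ y * (θ y * deriv V y - (β / 2) * deriv θ y)) x
        + β * h ^ 2 * deriv (deriv (fun y => ρ y * θ y)) x = 0 := by
  intro x hx
  set g : ℝ → ℝ := fun y => ρ y * θ y with hg
  -- key: on Ioo, the drift function equals -β * deriv g
  have key : ∀ y ∈ Set.Ioo (0:ℝ) 1,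
      ρ y * (θ y * deriv V y - (β / 2) * deriv θ y) = -β * deriv g y := by
    intro y hy
    have hθy : 0 < θ y := hθpos y hy
    have hVd : DifferentiableAt ℝ V y :=
      (hV.contDiffAt (isOpen_Ioo.mem_nhds hy)).differentiableAt (by norm_num)
    have hθd : DifferentiableAt ℝ θ y :=
      (hθ.contDiffAt (isOpen_Ioo.mem_nhds hy)).differentiableAt (by norm_num)
    have hcont : ContinuousAt θ y := hθd.continuousAt
    have hpos_ev : ∀ᶠ z in nhds y, 0 < θ z := hcont.eventually (eventually_gt_nhds hθy)
    -- g agrees near y with z ↦ Z⁻¹ * (exp(-V z/β) * θ z ^ (1/2))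
    have heq : g =ᶠ[nhds y]
        fun z => Z⁻¹ * (Real.exp (-V z / β) * θ z ^ ((1/2) : ℝ)) := by
      filter_upwards [hpos_ev] with z hz
      have h1 : (θ z) ^ (-(1/2) : ℝ) * θ z = θ z ^ ((1/2) : ℝ) := by
        have : (θ z) ^ (-(1/2) : ℝ) * θ z ^ (1 : ℝ) = θ z ^ ((1/2) : ℝ) := by
          rw [← Real.rpow_add hz]; norm_num
        rwa [Real.rpow_one] at this
      simp only [hg, hρ z]
      rw [mul_assoc, mul_assoc, h1]
    -- derivative of the smooth representative
    have hE : HasDerivAt (fun z => Real.exp (-V z / β))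
        (Real.exp (-V y / β) * (-deriv V y / β)) y :=
      HasDerivAt.exp ((hVd.hasDerivAt.neg).div_const β)
    have hP : HasDerivAt (fun z => θ z ^ ((1/2) : ℝ))
        (deriv θ y * (1/2) * θ y ^ ((1/2 : ℝ) - 1)) y :=
      hθd.hasDerivAt.rpow_const (Or.inl hθy.ne')
    have hG : HasDerivAt g (Z⁻¹ * (Real.exp (-V y / β) * (-deriv V y / β)
        * θ y ^ ((1/2) : ℝ)
        + Real.exp (-V y / β) * (deriv θ y * (1/2) * θ y ^ ((1/2 : ℝ) - 1)))) y := by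
      have := ((hE.mul hP).const_mul Z⁻¹)
      exact this.congr_of_eventuallyEq heq
    rw [hG.deriv, hρ y]
    have h2 : θ y ^ ((1/2 : ℝ) - 1) = θ y ^ (-(1/2) : ℝ) := by norm_num
    have h3 : (θ y) ^ (-(1/2) : ℝ) * θ y = θ y ^ ((1/2) : ℝ) := by
      have : (θ y) ^ (-(1/2) : ℝ) * θ y ^ (1 : ℝ) = θ y ^ ((1/2) : ℝ) := by
        rw [← Real.rpow_add hθy]; norm_num
      rwa [Real.rpow_one] at this
    rw [h2]
    set t := θ y ^ (-(1/2) : ℝ) with ht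
    set s := θ y ^ ((1/2) : ℝ) with hs
    field_simp
    linear_combination (deriv V y * 2) * h3
  -- conclude
  have hev : (fun y => ρ y * (θ y * deriv V y - (β / 2) * deriv θ y))
      =ᶠ[nhds x] fun y => -β * deriv g y := by
    filter_upwards [isOpen_Ioo.mem_nhds hx] with y hy using key y hy
  rw [hev.deriv_eq, deriv_const_mul_field]
  ring
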